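/- Let A be an anti-commutative CB-algebra over a field F and let I be a two-sided ideal of A. Then the quotient algebra A/I is again an anti-commutative CB-algebra. -/

import Mathlib

/-!
In an anti-commutative algebra the CB condition applied to `a · a = 0` gives `(a · z) · a = 0`;
polarizing in `a` and using anti-commutativity turns this into the identity
`(x · z) · y = -(x · y) · z`. Unlike the CB condition, an identity passes to quotients, and it
shows directly that `x · y ∈ I` forces `(x · z) · y ∈ I`.
-/

section

variable {R M : Type*} [CommRing R] [AddCommGroup M] [Module R M]

def IsCB (mul : M →ₗ[R] M →ₗ[R] M) : Prop :=
  ∀ x y : M, mul x y = 0 → ∀ z : M, mul (mul x z) y = 0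

namespace IsCB

variable {mul : M →ₗ[R] M →ₗ[R] M}

theorem isAlt_mul_mul_right (hcb : IsCB mul) (hac : mul.IsAlt) (z : M) :
    (mul ∘ₗ mul.flip z).IsAlt :=
  fun a => hcb a a (hac a) z

theorem neg_mul_mul_right_swap (hcb : IsCB mul) (hac : mul.IsAlt) (x y z : M) :
    -mul (mul x z) y = mul (mul y z) x :=
  (hcb.isAlt_mul_mul_right hac z).neg x y

theorem mul_mul_right_comm (hcb : IsCB mul) (hac : mul.IsAlt) (x y z : M) :
    mul (mul x z) y = -mul (mul x y) z := by
  calc mul (mul x z) y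
      = -mul (mul y z) x := neg_eq_iff_eq_neg.mp (hcb.neg_mul_mul_right_swap hac x y z)
    _ = mul (mul z y) x := by rw [← hac.neg y z, map_neg, LinearMap.neg_apply]
    _ = -mul (mul x y) z := hcb.neg_mul_mul_right_swap hac x z y |>.symm

end IsCB

end

theorem stmt_3 (F : Type*) [Field F] (A : Type*) [AddCommGroup A] [Module F A]
    (mul : A →ₗ[F] A →ₗ[F] A)
    (hac : ∀ x : A, mul x x = 0)
    (hcb : ∀ x y : A, mul x y = 0 → ∀ z : A, mul (mul x z) y = 0)
    (I : Submodule F A)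
    (hI : ∀ y ∈ I, ∀ a : A, mul y a ∈ I ∧ mul a y ∈ I)
    (mulQ : (A ⧸ I) →ₗ[F] (A ⧸ I) →ₗ[F] (A ⧸ I))
    (hmulQ : ∀ x y : A, mulQ (Submodule.Quotient.mk x) (Submodule.Quotient.mk y)
        = Submodule.Quotient.mk (mul x y)) :
    (∀ p : A ⧸ I, mulQ p p = 0) ∧
      (∀ p q : A ⧸ I, mulQ p q = 0 → ∀ r : A ⧸ I, mulQ (mulQ p r) q = 0) := by
  constructor
  · intro p
    obtain ⟨x, rfl⟩ := Submodule.Quotient.mk_surjective I p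
    rw [hmulQ, hac, Submodule.Quotient.mk_zero]
  · intro p q hpq r
    obtain ⟨x, rfl⟩ := Submodule.Quotient.mk_surjective I p
    obtain ⟨y, rfl⟩ := Submodule.Quotient.mk_surjective I q
    obtain ⟨z, rfl⟩ := Submodule.Quotient.mk_surjective I r
    rw [hmulQ, Submodule.Quotient.mk_eq_zero] at hpq
    rw [hmulQ, hmulQ, Submodule.Quotient.mk_eq_zero, IsCB.mul_mul_right_comm hcb hac x y z]
    exact I.neg_mem (hI _ hpq z).1
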